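/- Under a uniform data distribution on a finite dataset D and Gaussian observation model q(y|x) = N(y; Wx, σ²I), the slack of the Jensen bound equals the average posterior KL divergence: M(W,D,σ) - C(W,D,σ) = (1/|D|) Σ_{x_i ∈ D} E_{y ~ q(·|x_i)}[KL(Q_data(X) || Q(X|y))] ≥ 0, where Q(X|y) is the exact posterior over the finite dataset. -/

import Mathlib

/-!
For fixed `y`, the KL divergence from the uniform prior to the posterior is the logarithm of the
arithmetic mean of the likelihoods `q(y|x_j)` minus the mean of their logarithms; it is
nonnegative by concavity of `log`. Integrating against `q(·|x_i)` and averaging over `i` turns it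
into `M - C`. Splitting the integrals is legitimate because the Gaussian log-likelihoods are
quadratic in `y`, and the logarithm of the mean likelihood is squeezed between
`±∑ⱼ |log q(y|x_j)|`.
-/

open MeasureTheory Real

noncomputable def uniformPosteriorKL {N : ℕ} (p : Fin N → ℝ) : ℝ :=
  ∑ j, (1 / (N : ℝ)) * log ((1 / (N : ℝ)) / (p j / ∑ k, p k))

section Discrete

variable {N : ℕ} {p : Fin N → ℝ}

theorem uniformPosteriorKL_eq (hN : 0 < N) (hp : ∀ j, 0 < p j) :
    uniformPosteriorKL p =
      log ((1 / (N : ℝ)) * ∑ k, p k) - (1 / (N : ℝ)) * ∑ j, log (p j) := by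
  have hS : 0 < ∑ k, p k := Finset.sum_pos (fun k _ => hp k) ⟨⟨0, hN⟩, Finset.mem_univ _⟩
  have hterm : ∀ j, log ((1 / (N : ℝ)) / (p j / ∑ k, p k)) =
      log ((1 / (N : ℝ)) * ∑ k, p k) - log (p j) := fun j => by
    rw [div_div_eq_mul_div, log_div (by positivity) (hp j).ne']
  simp only [uniformPosteriorKL, hterm, ← Finset.mul_sum, Finset.sum_sub_distrib,
    Finset.sum_const, Finset.card_univ, Fintype.card_fin, nsmul_eq_mul]
  field_simp

theorem mean_log_le_log_mean (hN : 0 < N) (hp : ∀ j, 0 < p j) :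
    (1 / (N : ℝ)) * ∑ j, log (p j) ≤ log ((1 / (N : ℝ)) * ∑ k, p k) := by
  have hw : ∑ _j : Fin N, (1 / (N : ℝ)) = 1 := by simp [Finset.card_univ]; field_simp
  simpa only [Finset.mul_sum, smul_eq_mul] using
    strictConcaveOn_log_Ioi.concaveOn.le_map_sum (t := Finset.univ) (p := p)
      (fun _ _ => by positivity) hw (fun j _ => hp j)

theorem uniformPosteriorKL_nonneg (hN : 0 < N) (hp : ∀ j, 0 < p j) :
    0 ≤ uniformPosteriorKL p := by
  rw [uniformPosteriorKL_eq hN hp]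
  exact sub_nonneg.2 (mean_log_le_log_mean hN hp)

theorem abs_log_mean_le_sum_abs_log (hN : 0 < N) (hp : ∀ j, 0 < p j) :
    |log ((1 / (N : ℝ)) * ∑ k, p k)| ≤ ∑ j, |log (p j)| := by
  set T := ∑ j, |log (p j)|
  have hbounds : ∀ j, exp (-T) ≤ p j ∧ p j ≤ exp T := fun j => by
    have hj : |log (p j)| ≤ T := Finset.single_le_sum (f := fun j => |log (p j)|)
      (fun _ _ => abs_nonneg _) (Finset.mem_univ j)
    rw [← exp_log (hp j), exp_le_exp, exp_le_exp]
    exact abs_le.1 hj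
  have hmean : ∀ c, (1 / (N : ℝ)) * ∑ _k : Fin N, c = c := fun c => by
    simp [Finset.card_univ]; field_simp
  have hlo : exp (-T) ≤ (1 / (N : ℝ)) * ∑ k, p k := by
    conv_lhs => rw [← hmean (exp (-T))]
    gcongr with j; exact (hbounds j).1
  have hhi : (1 / (N : ℝ)) * ∑ k, p k ≤ exp T := by
    conv_rhs => rw [← hmean (exp T)]
    gcongr with j; exact (hbounds j).2
  have hpos : 0 < (1 / (N : ℝ)) * ∑ k, p k := (exp_pos _).trans_le hlo
  refine abs_le.2 ⟨?_, ?_⟩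
  · simpa only [log_exp] using log_le_log (exp_pos _) hlo
  · simpa only [log_exp] using log_le_log hpos hhi

end Discrete

section Integral

variable {Y : Type*} [MeasurableSpace Y] {μ : Measure Y} {N : ℕ} {q : Fin N → Y → ℝ}

theorem integrable_mul_log_mean (hN : 0 < N) (hq : ∀ k y, 0 < q k y)
    (hmeas : ∀ k, Measurable (q k)) {i : Fin N}
    (hint : ∀ j, Integrable (fun y => q i y * log (q j y)) μ) :
    Integrable (fun y => q i y * log ((1 / (N : ℝ)) * ∑ k, q k y)) μ := by
  refine (integrable_finsetSum Finset.univ fun j _ => (hint j).norm).mono' ?_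
    (ae_of_all _ fun y => ?_)
  · exact ((hmeas i).mul ((Finset.measurable_sum _ fun k _ => hmeas k).const_mul _).log)
      |>.aestronglyMeasurable
  · simp only [norm_mul, Real.norm_eq_abs, abs_of_pos (hq _ y), ← Finset.mul_sum]
    exact mul_le_mul_of_nonneg_left (abs_log_mean_le_sum_abs_log hN (hq · y)) (hq i y).le

theorem integral_mul_uniformPosteriorKL (hN : 0 < N) (hq : ∀ k y, 0 < q k y)
    (hmeas : ∀ k, Measurable (q k)) {i : Fin N}
    (hint : ∀ j, Integrable (fun y => q i y * log (q j y)) μ) :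
    ∫ y, q i y * uniformPosteriorKL (q · y) ∂μ =
      ∫ y, q i y * log ((1 / (N : ℝ)) * ∑ k, q k y) ∂μ
        - (1 / (N : ℝ)) * ∑ j, ∫ y, q i y * log (q j y) ∂μ := by
  have hcross : Integrable (fun y => ∑ j, (1 / (N : ℝ)) * (q i y * log (q j y))) μ :=
    integrable_finsetSum _ fun j _ => (hint j).const_mul _
  have hpoint : ∀ y, q i y * uniformPosteriorKL (q · y) =
      q i y * log ((1 / (N : ℝ)) * ∑ k, q k y)
        - ∑ j, (1 / (N : ℝ)) * (q i y * log (q j y)) :=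
    fun y => by
      rw [uniformPosteriorKL_eq hN (hq · y), ← Finset.mul_sum, ← Finset.mul_sum]
      ring
  simp only [hpoint]
  rw [integral_sub (integrable_mul_log_mean hN hq hmeas hint) hcross,
    integral_finsetSum _ fun j _ => (hint j).const_mul _, Finset.mul_sum]
  simp only [integral_const_mul]

theorem jensen_slack_eq (hN : 0 < N) (hq : ∀ k y, 0 < q k y)
    (hmeas : ∀ k, Measurable (q k))
    (hint : ∀ i j, Integrable (fun y => q i y * log (q j y)) μ) :
    (1 / (N : ℝ)) * ∑ i, ∫ y, q i y * log ((1 / (N : ℝ)) * ∑ k, q k y) ∂μ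
      - (1 / (N : ℝ) ^ 2) * ∑ i, ∑ j, ∫ y, q i y * log (q j y) ∂μ =
      (1 / (N : ℝ)) * ∑ i, ∫ y, q i y * uniformPosteriorKL (q · y) ∂μ := by
  simp only [integral_mul_uniformPosteriorKL hN hq hmeas (hint _), Finset.sum_sub_distrib,
    ← Finset.mul_sum]
  field_simp

theorem jensen_slack_nonneg (hN : 0 < N) (hq : ∀ k y, 0 < q k y) :
    0 ≤ (1 / (N : ℝ)) * ∑ i, ∫ y, q i y * uniformPosteriorKL (q · y) ∂μ :=
  mul_nonneg (by positivity) <| Finset.sum_nonneg fun i _ => integral_nonneg fun y =>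
    mul_nonneg (hq i y).le (uniformPosteriorKL_nonneg hN (hq · y))

end Integral

section Gaussian

variable {ι : Type*} [Fintype ι] {b : ℝ}

theorem integrable_exp_neg_mul_sum_sq (hb : 0 < b) :
    Integrable (fun v : ι → ℝ => exp (-b * ∑ i, v i ^ 2)) := by
  simp only [Finset.mul_sum, exp_sum]
  exact Integrable.fintype_prod (f := fun _ t => exp (-b * t ^ 2))
    fun _ => integrable_exp_neg_mul_sq hb

theorem integrable_sum_sq_mul_exp_neg_mul_sum_sq (hb : 0 < b) :
    Integrable (fun v : ι → ℝ => (∑ i, v i ^ 2) * exp (-b * ∑ i, v i ^ 2)) := by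
  refine ((integrable_exp_neg_mul_sum_sq (half_pos hb)).const_mul (2 / b)).mono'
    (by fun_prop) (ae_of_all _ fun v => ?_)
  set s := ∑ i, v i ^ 2
  have hs : 0 ≤ s := Finset.sum_nonneg fun i _ => sq_nonneg _
  -- `t ≤ exp t` at `t = b s / 2` trades the polynomial factor for half the decay rate
  have hlin : b / 2 * s ≤ exp (b / 2 * s) := by linarith [add_one_le_exp (b / 2 * s)]
  rw [Real.norm_eq_abs, abs_of_nonneg (by positivity)]
  calc s * exp (-b * s) = 2 / b * (b / 2 * s) * exp (-b * s) := by field_simp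
    _ ≤ 2 / b * exp (b / 2 * s) * exp (-b * s) := by gcongr
    _ = 2 / b * exp (-(b / 2) * s) := by rw [mul_assoc, ← exp_add]; ring_nf

theorem integrable_exp_neg_mul_sum_sq_mul (hb : 0 < b) {g : (ι → ℝ) → ℝ}
    (hg : AEStronglyMeasurable g) {A B : ℝ} (hle : ∀ v, |g v| ≤ A + B * ∑ i, v i ^ 2) :
    Integrable (fun v => exp (-b * ∑ i, v i ^ 2) * g v) := by
  refine (((integrable_exp_neg_mul_sum_sq hb).const_mul A).add
    ((integrable_sum_sq_mul_exp_neg_mul_sum_sq hb).const_mul B)).mono'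
    ((by fun_prop : Continuous _).aestronglyMeasurable.mul hg) (ae_of_all _ fun v => ?_)
  have := mul_le_mul_of_nonneg_left (hle v) (exp_pos (-b * ∑ i, v i ^ 2)).le
  rw [norm_mul, Real.norm_of_nonneg (exp_pos _).le, Real.norm_eq_abs, Pi.add_apply]
  linarith

end Gaussian

noncomputable def isotropicGaussianPDF (m : ℕ) (σ : ℝ) (u : Fin m → ℝ) : ℝ :=
  (2 * π * σ ^ 2) ^ (-(m : ℝ) / 2) * exp (-(∑ k, u k ^ 2) / (2 * σ ^ 2))

namespace isotropicGaussianPDF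

variable {m : ℕ} {σ : ℝ}

theorem pos (hσ : σ ≠ 0) (u : Fin m → ℝ) : 0 < isotropicGaussianPDF m σ u := by
  unfold isotropicGaussianPDF; positivity

theorem measurable : Measurable (isotropicGaussianPDF m σ) := by
  unfold isotropicGaussianPDF; fun_prop

theorem eq_mul_exp : isotropicGaussianPDF m σ = fun u =>
    (2 * π * σ ^ 2) ^ (-(m : ℝ) / 2) * exp (-(2 * σ ^ 2)⁻¹ * ∑ k, u k ^ 2) := by
  ext u; unfold isotropicGaussianPDF; congr 2; ring

theorem integrable_comp_sub_mul_log_comp_sub (hσ : σ ≠ 0) (a e : Fin m → ℝ) :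
    Integrable fun y =>
      isotropicGaussianPDF m σ (y - a) * log (isotropicGaussianPDF m σ (y - e)) := by
  set d := a - e
  set c := (2 * π * σ ^ 2) ^ (-(m : ℝ) / 2)
  set b := (2 * σ ^ 2)⁻¹
  have hb : 0 < b := by positivity
  have hlog : ∀ v, log (isotropicGaussianPDF m σ v) = log c - b * ∑ k, v k ^ 2 := fun v => by
    rw [eq_mul_exp, log_mul (by positivity) (exp_pos _).ne', log_exp]; ring
  have hsq : ∀ u : Fin m → ℝ,
      ∑ k, (u + d) k ^ 2 ≤ 2 * ∑ k, d k ^ 2 + 2 * ∑ k, u k ^ 2 := fun u => by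
    simp only [Finset.mul_sum, ← Finset.sum_add_distrib, Pi.add_apply]
    exact Finset.sum_le_sum fun k _ => by nlinarith [sq_nonneg (u k - d k)]
  have hle : ∀ u : Fin m → ℝ, |log (isotropicGaussianPDF m σ (u + d))| ≤
      (|log c| + b * (2 * ∑ k, d k ^ 2)) + 2 * b * ∑ k, u k ^ 2 := fun u => by
    rw [hlog]
    have hud := hsq u
    have hnn : 0 ≤ ∑ k, (u + d) k ^ 2 := Finset.sum_nonneg fun k _ => sq_nonneg _
    refine (abs_sub _ _).trans ?_
    rw [abs_of_nonneg (mul_nonneg hb.le hnn)]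
    nlinarith
  have := (integrable_exp_neg_mul_sum_sq_mul hb
    ((measurable.comp (measurable_id.add_const d)).log.aestronglyMeasurable) hle).const_mul c
  convert this.comp_sub_right a using 1
  ext y
  simp only [eq_mul_exp, Function.comp, id, d, sub_add_sub_cancel]
  ring

end isotropicGaussianPDF

/-- under a uniform data distribution on a finite dataset and Gaussian
observation model, the slack of the Jensen bound equals the average posterior KL
divergence: M(W,D,σ) - C(W,D,σ) = (1/|D|) Σ_i E_{y~q(·|x_i)}[KL(Q_data ‖ Q(·|y))] ≥ 0,
where Q(x_j|y) = q(y|x_j)/Σ_k q(y|x_k) is the exact posterior over the dataset. -/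
theorem jensen_slack_eq_avg_posterior_kl
    {n m N : ℕ} (hN : 0 < N)
    (x : Fin N → (Fin n → ℝ)) (W : Matrix (Fin m) (Fin n) ℝ)
    (σ : ℝ) (hσ : 0 < σ)
    (φ : (Fin m → ℝ) → ℝ)
    (hφ : φ = fun u => (2 * π * σ ^ 2) ^ (-(m : ℝ) / 2) *
      Real.exp (-(∑ k, u k ^ 2) / (2 * σ ^ 2)))
    (Mobj Cobj : ℝ)
    (hM : Mobj = (1 / (N : ℝ)) * ∑ i, (∫ y, φ (y - W.mulVec (x i)) *
            Real.log ((1 / (N : ℝ)) * ∑ k, φ (y - W.mulVec (x k))))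
          + (1 / 2) * Real.log (2 * π * Real.exp 1 * σ ^ 2))
    (hC : Cobj = (1 / (N : ℝ) ^ 2) * ∑ i, ∑ j, (∫ y, φ (y - W.mulVec (x i)) *
            Real.log (φ (y - W.mulVec (x j))))
          + (1 / 2) * Real.log (2 * π * Real.exp 1 * σ ^ 2))
    -- discrete KL divergence between the uniform prior and the exact posterior given y
    (KLy : (Fin m → ℝ) → ℝ)
    (hKL : KLy = fun y => ∑ j, (1 / (N : ℝ)) *
      Real.log ((1 / (N : ℝ)) /
        (φ (y - W.mulVec (x j)) / ∑ k, φ (y - W.mulVec (x k))))) :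
    Mobj - Cobj = (1 / (N : ℝ)) * ∑ i, ∫ y, φ (y - W.mulVec (x i)) * KLy y
    ∧ 0 ≤ Mobj - Cobj := by
  obtain rfl : φ = isotropicGaussianPDF m σ := hφ
  set q : Fin N → (Fin m → ℝ) → ℝ := fun i y =>
    isotropicGaussianPDF m σ (y - W.mulVec (x i))
  obtain rfl : KLy = fun y => uniformPosteriorKL (q · y) := hKL
  have hq : ∀ k y, 0 < q k y := fun k y => isotropicGaussianPDF.pos hσ.ne' _
  have hmeas : ∀ k, Measurable (q k) := fun k =>
    isotropicGaussianPDF.measurable.comp (measurable_id.sub_const _)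
  have hint : ∀ i j, Integrable (fun y => q i y * log (q j y)) := fun i j =>
    isotropicGaussianPDF.integrable_comp_sub_mul_log_comp_sub hσ.ne' _ _
  have hslack :
      Mobj - Cobj = (1 / (N : ℝ)) * ∑ i, ∫ y, q i y * uniformPosteriorKL (q · y) := by
    rw [hM, hC, add_sub_add_right_eq_sub]
    exact jensen_slack_eq hN hq hmeas hint
  exact ⟨hslack, hslack ▸ jensen_slack_nonneg hN hq⟩
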